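/- arXiv:2103.05514 — 3 statements merged into one kernel-verified Lean document; each statement's English description precedes it below -/
import Mathlib

section
/- The function γ ↦ cos(3γ/2)/(sin γ)^{3/2} is strictly decreasing on the interval (0, π). -/
/-!
The theorem is the case `a = 3/2`. The quotient rule gives
`d/dγ (cos (a γ) / sin γ ^ a) = -a · (sin (a γ) sin γ + cos (a γ) cos γ) · sin γ ^ (a - 1) / sin γ ^ (2a)`,
and the bracket is `cos ((a - 1) γ)` by the subtraction formula. For `1/2 ≤ a ≤ 3/2` and
`0 < γ < π` we have `|(a - 1) γ| < π/2`, so the derivative is negative.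
-/

open Real

lemma hasDerivAt_cos_mul_div_sin_rpow (a : ℝ) {x : ℝ} (hx : 0 < sin x) :
    HasDerivAt (fun γ => cos (a * γ) / sin γ ^ a)
      (-a * cos ((a - 1) * x) / sin x ^ (a + 1)) x := by
  have hnum : HasDerivAt (fun γ => cos (a * γ)) (-sin (a * x) * a) x := by
    simpa only [mul_one] using ((hasDerivAt_id' x).const_mul a).cos
  have hden : HasDerivAt (fun γ => sin γ ^ a) (cos x * a * sin x ^ (a - 1)) x :=
    (hasDerivAt_sin x).rpow_const (Or.inl hx.ne')
  refine (hnum.div hden (rpow_pos_of_pos hx a).ne').congr_deriv ?_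
  have hpow : sin x ^ a = sin x ^ (a - 1) * sin x := by
    rw [← rpow_add_one hx.ne', sub_add_cancel]
  have hpow' : sin x ^ (a + 1) = sin x ^ (a - 1) * sin x ^ 2 := by
    rw [← rpow_natCast, ← rpow_add hx]; ring_nf
  have hcos : cos ((a - 1) * x) = sin (a * x) * sin x + cos (a * x) * cos x := by
    rw [sub_mul, one_mul, cos_sub]; ring
  have hpos : 0 < sin x ^ (a - 1) := rpow_pos_of_pos hx _
  rw [hpow', hcos, hpow]
  field_simp
  ring

lemma cos_sub_one_mul_pos {a x : ℝ} (ha₁ : 1 / 2 ≤ a) (ha₂ : a ≤ 3 / 2) (hx : x ∈ Set.Ioo 0 π) :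
    0 < cos ((a - 1) * x) := by
  obtain ⟨hx₀, hxπ⟩ := hx
  apply cos_pos_of_mem_Ioo
  constructor <;> nlinarith

theorem strictAntiOn_cos_mul_div_sin_rpow {a : ℝ} (ha₁ : 1 / 2 ≤ a) (ha₂ : a ≤ 3 / 2) :
    StrictAntiOn (fun γ => cos (a * γ) / sin γ ^ a) (Set.Ioo 0 π) := by
  have hderiv : ∀ x ∈ Set.Ioo 0 π, HasDerivAt (fun γ => cos (a * γ) / sin γ ^ a)
      (-a * cos ((a - 1) * x) / sin x ^ (a + 1)) x := fun x hx =>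
    hasDerivAt_cos_mul_div_sin_rpow a (sin_pos_of_mem_Ioo hx)
  refine strictAntiOn_of_deriv_neg (convex_Ioo 0 π)
    (fun x hx => (hderiv x hx).continuousAt.continuousWithinAt) fun x hx => ?_
  rw [interior_Ioo] at hx
  rw [(hderiv x hx).deriv]
  have hcos := cos_sub_one_mul_pos ha₁ ha₂ hx
  apply div_neg_of_neg_of_pos _ (rpow_pos_of_pos (sin_pos_of_mem_Ioo hx) _)
  nlinarith

theorem strictAntiOn_cos_div_sin_pow :
    StrictAntiOn (fun γ : ℝ => Real.cos (3 * γ / 2) / Real.sin γ ^ ((3 : ℝ) / 2))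
      (Set.Ioo 0 π) := by
  have h := strictAntiOn_cos_mul_div_sin_rpow (a := 3 / 2) (by norm_num) le_rfl
  simpa only [div_mul_eq_mul_div] using h
end

section
/- For z ∈ ℂ \ ℝ, the function g_A(x - z) := exp(-(2/3)·Re((x - z)^{3/2})) is strictly decreasing in x on [0, ∞), where the principal branch of the power 3/2 (branch cut along the negative reals) is used. -/
open Real Complex

lemma re_cpow_half_pos (w : ℂ) (hw : w.im ≠ 0) : 0 < (w ^ ((1:ℂ)/2)).re := by
  have hw0 : w ≠ 0 := fun h => hw (by simp [h])
  rw [Complex.cpow_def_of_ne_zero hw0, Complex.exp_re]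
  apply mul_pos (Real.exp_pos _)
  have h1 : (Complex.log w * (1/2)).im = w.arg / 2 := by
    simp [Complex.log_im, Complex.mul_im, Complex.log_re]; ring
  rw [h1]
  apply Real.cos_pos_of_mem_Ioo
  have h2 : w.arg ≠ π := fun h => hw ((Complex.arg_eq_pi_iff.mp h).2)
  have h3 := lt_of_le_of_ne (Complex.arg_le_pi w) h2
  have h4 := Complex.neg_pi_lt_arg w
  constructor <;> [linarith; linarith]

lemma deriv_part (z : ℂ) (hz : z.im ≠ 0) (x : ℝ) :
    HasDerivAt (fun x : ℝ => ((((x:ℂ) - z) ^ ((3:ℂ)/2)).re))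
      ((3/2 * ((x:ℂ) - z) ^ ((1:ℂ)/2)).re) x := by
  have hsl : (x:ℂ) - z ∈ Complex.slitPlane := by
    rw [Complex.mem_slitPlane_iff]; right; simpa using hz
  have hw : HasDerivAt (fun w : ℂ => (w - z) ^ ((3:ℂ)/2))
      ((3:ℂ)/2 * ((x:ℂ) - z) ^ ((3:ℂ)/2 - 1)) x := by
    simpa using ((hasDerivAt_id ((x:ℂ))).sub_const z).cpow_const hsl
  have h2 : (3:ℂ)/2 - 1 = 1/2 := by ring
  rw [h2] at hw
  exact Complex.reCLM.hasFDerivAt.comp_hasDerivAt x hw.comp_ofReal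

/-- `g_A(w) = exp(-(2/3) Re w^{3/2})` with the principal branch of the power. -/
noncomputable def gA (w : ℂ) : ℝ := Real.exp (-(2 / 3) * (w ^ ((3 : ℂ) / 2)).re)

theorem gA_strictAntiOn_of_not_real (z : ℂ) (hz : z.im ≠ 0) :
    StrictAntiOn (fun x : ℝ => gA ((x : ℂ) - z)) (Set.Ici 0) := by
  have hmono : StrictMonoOn (fun x : ℝ => (((x:ℂ) - z) ^ ((3:ℂ)/2)).re) (Set.Ici 0) := by
    apply strictMonoOn_of_deriv_pos (convex_Ici 0)
    · exact fun x _ => ((deriv_part z hz x).continuousAt).continuousWithinAt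
    · intro x _
      rw [(deriv_part z hz x).deriv]
      have him : ((x:ℂ) - z).im ≠ 0 := by simpa using hz
      have := re_cpow_half_pos ((x:ℂ) - z) him
      have h3 : ((3:ℂ)/2 * ((x:ℂ) - z) ^ ((1:ℂ)/2)).re
          = 3/2 * (((x:ℂ) - z) ^ ((1:ℂ)/2)).re := by
        simp [Complex.mul_re]
      rw [h3]; linarith
  intro a ha b hb hab
  simp only [gA]
  apply Real.exp_lt_exp.mpr
  have := hmono ha hb hab
  nlinarith
end

section
/- For every complex number w and every integer n, if |w - nπ| ≥ π/4 then e^{|Im w|} < 4 |sin w|. -/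
/-!
Since `|sin (x + iy)|² = sin² x + sinh² y`, we have `|sin w| ≥ sinh |Im w|`, and, after translating
`w` by a multiple of `π` so that `|Re w| ≤ π/2`, Jordan's inequality `|sin x| ≥ (2/π)|x|` together
with `|sinh y| ≥ |y|` gives `|sin w| ≥ (2/π) dist(w, πℤ) ≥ 1/2`. Either `e^{|Im w|} < 2 ≤ 4 |sin w|`,
or `e^{|Im w|} ≥ 2`, in which case `e^{|Im w|} < 4 sinh |Im w| ≤ 4 |sin w|`.
-/

open Real Complex

theorem abs_sub_round_div_mul_le {α : Type*} [Field α] [LinearOrder α] [IsStrictOrderedRing α]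
    [FloorRing α] {c : α} (hc : 0 < c) (x : α) :
    |x - round (x / c) * c| ≤ c / 2 := by
  have := abs_sub_round (x / c)
  calc |x - round (x / c) * c| = |x / c - round (x / c)| * c := by
        rw [← abs_of_pos hc, ← abs_mul, abs_of_pos hc, sub_mul, div_mul_cancel₀ _ hc.ne']
    _ ≤ c / 2 := by nlinarith

theorem Real.exp_lt_two_or_exp_lt_four_mul_sinh (a : ℝ) : exp a < 2 ∨ exp a < 4 * sinh a := by
  refine or_iff_not_imp_left.2 fun h => ?_
  have : exp a * exp (-a) = 1 := by rw [← exp_add, add_neg_cancel, exp_zero]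
  rw [sinh_eq]
  nlinarith [exp_pos (-a)]

namespace Complex

theorem norm_sin_sq (z : ℂ) :
    ‖sin z‖ ^ 2 = Real.sin z.re ^ 2 + Real.sinh z.im ^ 2 := by
  nth_rewrite 1 [← re_add_im z]
  rw [Complex.sq_norm, sin_add, sin_mul_I, cos_mul_I, ← ofReal_sin, ← ofReal_cos, ← ofReal_sinh,
    ← ofReal_cosh, normSq_apply]
  simp only [add_re, add_im, mul_re, mul_im, ofReal_re, ofReal_im, I_re, I_im]
  nlinarith [Real.sin_sq_add_cos_sq z.re, Real.cosh_sq z.im]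

theorem sinh_abs_im_le_norm_sin (z : ℂ) : Real.sinh |z.im| ≤ ‖sin z‖ := by
  rw [← Real.abs_sinh]
  refine abs_le_of_sq_le_sq ?_ (norm_nonneg _)
  rw [norm_sin_sq]
  nlinarith [sq_nonneg (Real.sin z.re)]

theorem two_div_pi_mul_norm_le_norm_sin {z : ℂ} (hz : |z.re| ≤ π / 2) :
    2 / π * ‖z‖ ≤ ‖sin z‖ := by
  have hre : 2 / π * |z.re| ≤ |Real.sin z.re| := Real.mul_abs_le_abs_sin hz
  have him : 2 / π * |z.im| ≤ |Real.sinh z.im| := by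
    have h2π : 2 / π ≤ 1 := (div_le_one pi_pos).2 two_le_pi
    rw [Real.abs_sinh]
    calc 2 / π * |z.im| ≤ |z.im| := mul_le_of_le_one_left (abs_nonneg _) h2π
      _ ≤ Real.sinh |z.im| := Real.self_le_sinh_iff.2 (abs_nonneg _)
  refine (sq_le_sq₀ (by positivity) (norm_nonneg _)).1 ?_
  calc (2 / π * ‖z‖) ^ 2 = (2 / π * |z.re|) ^ 2 + (2 / π * |z.im|) ^ 2 := by
        rw [mul_pow, Complex.sq_norm, normSq_apply, mul_pow, mul_pow, sq_abs, sq_abs]; ring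
    _ ≤ |Real.sin z.re| ^ 2 + |Real.sinh z.im| ^ 2 := by gcongr
    _ = ‖sin z‖ ^ 2 := by rw [norm_sin_sq, sq_abs, sq_abs]

theorem norm_sin_sub_int_mul_pi (z : ℂ) (n : ℤ) : ‖sin (z - n * π)‖ = ‖sin z‖ := by
  rw [sin_antiperiodic.sub_int_mul_eq]
  simp

theorem two_div_pi_mul_le_norm_sin {w : ℂ} {r : ℝ} (h : ∀ n : ℤ, r ≤ ‖w - n * π‖) :
    2 / π * r ≤ ‖sin w‖ := by
  set n := round (w.re / π)
  have hre : |(w - n * π).re| ≤ π / 2 := by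
    simpa using abs_sub_round_div_mul_le pi_pos w.re
  calc 2 / π * r ≤ 2 / π * ‖w - n * π‖ := by gcongr; exact h n
    _ ≤ ‖sin (w - n * π)‖ := two_div_pi_mul_norm_le_norm_sin hre
    _ = ‖sin w‖ := norm_sin_sub_int_mul_pi w n

end Complex

/-- Classical lemma (Pöschel–Trubowitz): away from the zeros of `sin`,
`e^{|Im w|} < 4 |sin w|`. -/
theorem exp_abs_im_lt_four_abs_sin (w : ℂ)
    (h : ∀ n : ℤ, π / 4 ≤ ‖w - (n : ℂ) * (π : ℂ)‖) :
    Real.exp |w.im| < 4 * ‖Complex.sin w‖ := by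
  have hhalf : 1 / 2 ≤ ‖Complex.sin w‖ := by
    have : 2 / π * (π / 4) = 1 / 2 := by field_simp; norm_num
    exact this ▸ Complex.two_div_pi_mul_le_norm_sin h
  rcases Real.exp_lt_two_or_exp_lt_four_mul_sinh |w.im| with hexp | hsinh
  · linarith
  · linarith [Complex.sinh_abs_im_le_norm_sin w]
end
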